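/- Let g = g_{5,3,3(λ)}. For every F ∈ g*, the skew-symmetric bilinear form B_F has rank either 0 or 2; equivalently, the subspace {X ∈ g : F([X, Y]) = 0 for all Y ∈ g} has dimension 5 or 3. (This is the infinitesimal MD-condition: every coadjoint orbit of the corresponding connected simply connected Lie group G_{5,3,3(λ)} has dimension 0 or 2, so it is an MD5-group.) -/

import Mathlib

open scoped Matrix

/-- The Lie bracket of g_{5,3,3(λ)}: [X1,X2] = X3, [X2,X3] = λ·X3, [X2,X4] = X4, [X2,X5] = X5,
written in coordinates with respect to the basis (X₁, X₂, X₃, X₄, X₅) (all other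
brackets of basis vectors vanish); it is the bilinear extension of the structure
constants above. -/
def bracketg533 (l : ℝ) (U V : Fin 5 → ℝ) : Fin 5 → ℝ :=
  ![0, 0,
    (U 0 * V 1 - U 1 * V 0) + l * (U 1 * V 2 - U 2 * V 1),
    U 1 * V 3 - U 3 * V 1,
    U 1 * V 4 - U 4 * V 1]

/-- The matrix (in the basis (X₁, ..., X₅)) of the skew-symmetric bilinear form
B_F(X, Y) = F([X, Y]); the functional F is identified with its coordinate vector with
respect to the dual basis, acting by the dot product. -/
def BFg533 (l : ℝ) (F : Fin 5 → ℝ) : Matrix (Fin 5) (Fin 5) ℝ :=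
  Matrix.of fun i j => F ⬝ᵥ bracketg533 l (Pi.single i 1) (Pi.single j 1)

/-- The radical {X ∈ g | F([X, Y]) = 0 for all Y ∈ g} of the form B_F, as a subspace. -/
def radg533 (l : ℝ) (F : Fin 5 → ℝ) : Submodule ℝ (Fin 5 → ℝ) where
  carrier := {X | ∀ Y : Fin 5 → ℝ, F ⬝ᵥ bracketg533 l X Y = 0}
  zero_mem' := by
    intro Y
    simp [bracketg533, dotProduct, Fin.sum_univ_five]
  add_mem' := by
    intro a b ha hb Y
    have h1 := ha Y
    have h2 := hb Y
    simp only [bracketg533, dotProduct, Fin.sum_univ_five, Matrix.cons_val_zero,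
      Matrix.cons_val_one, Matrix.head_cons, Matrix.cons_val_two, Matrix.tail_cons,
      Matrix.cons_val_three, Matrix.cons_val_four, Pi.add_apply] at h1 h2 ⊢
    linear_combination h1 + h2
  smul_mem' := by
    intro c a ha Y
    have h1 := ha Y
    simp only [bracketg533, dotProduct, Fin.sum_univ_five, Matrix.cons_val_zero,
      Matrix.cons_val_one, Matrix.head_cons, Matrix.cons_val_two, Matrix.tail_cons,
      Matrix.cons_val_three, Matrix.cons_val_four, Pi.smul_apply, smul_eq_mul] at h1 ⊢
    linear_combination c * h1

/-!
The span of `X₁, X₃, X₄, X₅` is an abelian ideal of codimension one, so every bracket factors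
through `X₂`: `[X, Y] = Y₂ [X, X₂] - X₂ [Y, X₂]`. Hence `B_F = α ∧ X₂*` with `α = F([·, X₂])`.
The matrix `u vᵀ - v uᵀ` of a decomposable form `u ∧ v` vanishes when `u, v` are dependent,
and otherwise it is `Aᵀ J A` with `J` invertible and `A` the surjective matrix with rows `u, v`,
so its rank is `rank A = 2`. The radical of `B_F` is the kernel of `B_Fᵀ`, of dimension
`5 - rank B_F`.
-/

open Matrix

section Wedge

variable {K n : Type*} [Field K]

def wedgeMatrix (u v : n → K) : Matrix n n K :=
  vecMulVec u v - vecMulVec v u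

theorem wedgeMatrix_eq_zero_of_not_linearIndependent {u v : n → K}
    (h : ¬ LinearIndependent K ![u, v]) : wedgeMatrix u v = 0 := by
  obtain ⟨s, t, hst, hne⟩ : ∃ s t : K, s • u + t • v = 0 ∧ (s ≠ 0 ∨ t ≠ 0) := by
    simpa [LinearIndependent.pair_iff, or_iff_not_imp_left] using h
  ext i j
  have hi := congrFun hst i
  have hj := congrFun hst j
  simp only [Pi.add_apply, Pi.smul_apply, smul_eq_mul, Pi.zero_apply] at hi hj
  simp only [wedgeMatrix, Matrix.sub_apply, vecMulVec_apply, Matrix.zero_apply]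
  rcases hne with hs | ht
  · refine (mul_eq_zero.mp ?_).resolve_left hs
    linear_combination v j * hi - v i * hj
  · refine (mul_eq_zero.mp ?_).resolve_left ht
    linear_combination u i * hj - u j * hi

theorem wedgeMatrix_eq_transpose_mul_mul (u v : n → K) :
    wedgeMatrix u v = (of ![u, v])ᵀ * !![(0 : K), 1; -1, 0] * of ![u, v] := by
  ext i j
  simp only [wedgeMatrix, vecMulVec, Matrix.sub_apply, of_apply, Matrix.mul_apply,
    transpose_apply, cons_val', cons_val_fin_one, Fin.sum_univ_two, cons_val_zero, cons_val_one,
    mul_zero, mul_neg, mul_one, zero_add, neg_mul, add_zero]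
  ring

theorem Matrix.rank_mul_eq_left_of_surjective {l m R : Type*} [Fintype m] [Fintype n]
    [CommSemiring R] (C : Matrix l m R) (A : Matrix m n R) (hA : Function.Surjective A.mulVecLin) :
    (C * A).rank = C.rank := by
  rw [rank, rank, mulVecLin_mul, LinearMap.range_comp, LinearMap.range_eq_top.mpr hA,
    Submodule.map_top]

theorem LinearIndependent.surjective_mulVecLin {m : Type*} [Fintype m] [Fintype n]
    {A : Matrix m n K} (h : LinearIndependent K A.row) : Function.Surjective A.mulVecLin := by
  rw [← LinearMap.range_eq_top]
  apply Submodule.eq_top_of_finrank_eq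
  rw [Module.finrank_fintype_fun_eq_card, ← h.rank_matrix, rank]

theorem rank_wedgeMatrix_of_linearIndependent [Fintype n] {u v : n → K}
    (h : LinearIndependent K ![u, v]) : (wedgeMatrix u v).rank = 2 := by
  rw [wedgeMatrix_eq_transpose_mul_mul, rank_mul_eq_left_of_surjective _ _
    (h.surjective_mulVecLin (A := of ![u, v])), rank_mul_eq_left_of_isUnit_det,
    rank_transpose, h.rank_matrix (M := of ![u, v]), Fintype.card_fin]
  simp [det_fin_two]

theorem rank_wedgeMatrix_eq_zero_or_two [Fintype n] (u v : n → K) :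
    (wedgeMatrix u v).rank = 0 ∨ (wedgeMatrix u v).rank = 2 := by
  by_cases h : LinearIndependent K ![u, v]
  · exact Or.inr (rank_wedgeMatrix_of_linearIndependent h)
  · exact Or.inl (by rw [wedgeMatrix_eq_zero_of_not_linearIndependent h, rank_zero])

theorem Matrix.mem_ker_mulVecLin_transpose_iff [Fintype n] (A : Matrix n n K) (x : n → K) :
    x ∈ LinearMap.ker Aᵀ.mulVecLin ↔ ∀ y, x ⬝ᵥ A *ᵥ y = 0 := by
  simp only [LinearMap.mem_ker, mulVecLin_apply, mulVec_transpose, dotProduct_mulVec,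
    dotProduct_eq_zero_iff]

theorem Matrix.finrank_ker_mulVecLin_transpose_add_rank [Fintype n] (A : Matrix n n K) :
    Module.finrank K (LinearMap.ker Aᵀ.mulVecLin) + A.rank = Fintype.card n := by
  rw [← rank_transpose, add_comm, rank, LinearMap.finrank_range_add_finrank_ker,
    Module.finrank_fintype_fun_eq_card]

end Wedge

theorem BFg533_eq_wedgeMatrix (l : ℝ) (F : Fin 5 → ℝ) :
    BFg533 l F = wedgeMatrix ![F 2, 0, -(l * F 2), -F 3, -F 4] (Pi.single 1 1) := by
  ext i j
  rw [wedgeMatrix, Matrix.sub_apply, vecMulVec_apply, vecMulVec_apply]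
  fin_cases i <;> fin_cases j <;>
    simp [BFg533, bracketg533, dotProduct, Fin.sum_univ_five, mul_comm]

theorem dotProduct_bracketg533 (l : ℝ) (F X Y : Fin 5 → ℝ) :
    F ⬝ᵥ bracketg533 l X Y = X ⬝ᵥ BFg533 l F *ᵥ Y := by
  simp only [dotProduct, bracketg533, Fin.isValue, Fin.sum_univ_five, cons_val_zero, mul_zero,
    cons_val_one, add_zero, cons_val, zero_add, mulVec, BFg533, Pi.single_apply, mul_ite, mul_one,
    of_apply, one_ne_zero, ↓reduceIte, zero_sub, Fin.reduceEq, sub_self, mul_neg, neg_mul, ite_mul,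
    zero_mul, zero_ne_one, sub_zero, neg_zero]
  ring

theorem radg533_eq_ker (l : ℝ) (F : Fin 5 → ℝ) :
    radg533 l F = LinearMap.ker (BFg533 l F)ᵀ.mulVecLin := by
  ext X
  rw [mem_ker_mulVecLin_transpose_iff]
  exact forall_congr' fun Y => by rw [dotProduct_bracketg533]

theorem md_condition_g533_general (l : ℝ) (F : Fin 5 → ℝ) :
    ((BFg533 l F).rank = 0 ∨ (BFg533 l F).rank = 2) ∧
    (Module.finrank ℝ (radg533 l F) = 5 ∨ Module.finrank ℝ (radg533 l F) = 3) := by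
  have hrank : (BFg533 l F).rank = 0 ∨ (BFg533 l F).rank = 2 := by
    rw [BFg533_eq_wedgeMatrix]
    exact rank_wedgeMatrix_eq_zero_or_two _ _
  have hrad : Module.finrank ℝ (radg533 l F) + (BFg533 l F).rank = 5 := by
    rw [radg533_eq_ker]
    exact finrank_ker_mulVecLin_transpose_add_rank _
  omega

/-- For every functional F, the skew-symmetric form B_F has rank 0 or 2; equivalently,
its radical {X | F([X, Y]) = 0 for all Y} has dimension 5 or 3 (the infinitesimal
MD-condition: every coadjoint orbit has dimension 0 or 2). -/
theorem md_condition_g533 (l : ℝ) (hl1 : l ≠ 1) (F : Fin 5 → ℝ) :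
    ((BFg533 l F).rank = 0 ∨ (BFg533 l F).rank = 2) ∧
    (Module.finrank ℝ (radg533 l F) = 5 ∨ Module.finrank ℝ (radg533 l F) = 3) :=
  md_condition_g533_general l F
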